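/- Assume 0 < k a₁ < c, and let X₀ be any element of {0, −i k a₁ + c(k), −i k a₁ − c(k)} (the three simple roots of X·Q(X)). Then Q(X₀) + X₀·Q'(X₀) ≠ 0, and there exist ε₀ > 0 and a function ε ↦ X_ε defined for ε ∈ (−ε₀, ε₀) with X_0 = X₀, F_ε(X_ε) = 0 for all such ε, and X_ε = X₀ − ε · (3 i γ k a₁/2) · Q_T(X₀) / (Q(X₀) + X₀ Q'(X₀)) + O(ε²) as ε → 0. -/

import Mathlib

open Complex Filter Asymptotics

/-- The quadratic Q(X) = X² + 2 i k a₁ X − c². -/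
noncomputable def Q (k a₁ c : ℝ) (X : ℂ) : ℂ :=
  X ^ 2 + 2 * I * (k : ℂ) * (a₁ : ℂ) * X - (c : ℂ) ^ 2

/-- The derivative Q'(X) = 2 X + 2 i k a₁. -/
noncomputable def Q' (k a₁ : ℝ) (X : ℂ) : ℂ :=
  2 * X + 2 * I * (k : ℂ) * (a₁ : ℂ)

/-- The quadratic Q_T(X) = X² + 2 i k a₁ X − c²/γ. -/
noncomputable def QT (k a₁ c γ : ℝ) (X : ℂ) : ℂ :=
  X ^ 2 + 2 * I * (k : ℂ) * (a₁ : ℂ) * X - (c : ℂ) ^ 2 / (γ : ℂ)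

/-- F_ε(X) = X·Q(X) + ε·(3 i γ k a₁ / 2)·Q_T(X). -/
noncomputable def F (k a₁ c γ ε : ℝ) (X : ℂ) : ℂ :=
  X * Q k a₁ c X + (ε : ℂ) * (3 * I * (γ : ℂ) * (k : ℂ) * (a₁ : ℂ) / 2) * QT k a₁ c γ X


/-- Auxiliary implicit-function-theorem lemma. -/
lemma aux_implicit (G : ℝ × ℂ → ℂ) (X₀ D w : ℂ) (hD : D ≠ 0)
    (hGd : HasStrictFDerivAt G
      (D • (ContinuousLinearMap.snd ℝ ℝ ℂ)
        + w • (Complex.ofRealCLM.comp (ContinuousLinearMap.fst ℝ ℝ ℂ))) ((0:ℝ), X₀))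
    (hG0 : G ((0:ℝ), X₀) = 0) :
    ∃ Xf : ℝ → ℂ, Xf 0 = X₀ ∧ (∀ᶠ ε : ℝ in nhds 0, G (ε, Xf ε) = 0)
      ∧ (fun ε : ℝ => Xf ε - X₀) =O[nhds 0] (fun ε : ℝ => ε) := by
  set m2 : ℝ × ℂ →L[ℝ] ℂ :=
    D • (ContinuousLinearMap.snd ℝ ℝ ℂ)
      + w • (Complex.ofRealCLM.comp (ContinuousLinearMap.fst ℝ ℝ ℂ)) with hm2def
  set minv : ℝ × ℂ →L[ℝ] ℂ :=
    D⁻¹ • (ContinuousLinearMap.snd ℝ ℝ ℂ)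
      + (-(D⁻¹ * w)) • (Complex.ofRealCLM.comp (ContinuousLinearMap.fst ℝ ℝ ℂ)) with hminvdef
  have happ : ∀ x : ℝ × ℂ, m2 x = D * x.2 + w * (x.1 : ℂ) := by
    intro x; simp [hm2def, smul_eq_mul]
  have happ' : ∀ x : ℝ × ℂ, minv x = D⁻¹ * x.2 + (-(D⁻¹ * w)) * (x.1 : ℂ) := by
    intro x; simp [hminvdef, smul_eq_mul]
  have hleft : Function.LeftInverse ((ContinuousLinearMap.fst ℝ ℝ ℂ).prod minv)
      ((ContinuousLinearMap.fst ℝ ℝ ℂ).prod m2) := by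
    intro x
    refine Prod.ext (by simp) ?_
    show minv ((x.1, m2 x)) = x.2
    rw [happ', happ]
    field_simp
    ring
  have hright : Function.RightInverse ((ContinuousLinearMap.fst ℝ ℝ ℂ).prod minv)
      ((ContinuousLinearMap.fst ℝ ℝ ℂ).prod m2) := by
    intro x
    refine Prod.ext (by simp) ?_
    show m2 ((x.1, minv x)) = x.2
    rw [happ, happ']
    field_simp
    ring
  set e : (ℝ × ℂ) ≃L[ℝ] (ℝ × ℂ) :=
    ContinuousLinearEquiv.equivOfInverse ((ContinuousLinearMap.fst ℝ ℝ ℂ).prod m2)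
      ((ContinuousLinearMap.fst ℝ ℝ ℂ).prod minv) hleft hright with hedef
  set gfun : ℝ × ℂ → ℝ × ℂ := fun p => (p.1, G p) with hgdef
  have hg' : HasStrictFDerivAt gfun (e : (ℝ × ℂ) →L[ℝ] (ℝ × ℂ)) ((0:ℝ), X₀) :=
    (hasStrictFDerivAt_fst (E := ℝ) (F := ℂ)).prodMk hGd
  set li : ℝ × ℂ → ℝ × ℂ := hg'.localInverse gfun e ((0:ℝ), X₀) with hlidef
  have hg0 : gfun ((0:ℝ), X₀) = ((0:ℝ), (0:ℂ)) := by
    refine Prod.ext rfl hG0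
  refine ⟨fun ε => (li ((ε, 0) : ℝ × ℂ)).2, ?_, ?_, ?_⟩
  · have h := hg'.localInverse_apply_image
    rw [hg0] at h
    rw [← hlidef] at h
    exact congrArg Prod.snd h
  · have hri := hg'.eventually_right_inverse
    rw [hg0] at hri
    have hι : Filter.Tendsto (fun ε : ℝ => ((ε, 0) : ℝ × ℂ)) (nhds 0) (nhds ((0:ℝ), (0:ℂ))) :=
      (continuous_id.prodMk continuous_const).tendsto' 0 _ rfl
    have h2 := hι.eventually hri
    filter_upwards [h2] with ε hε
    have h1 : (li ((ε, 0) : ℝ × ℂ)).1 = ε := congrArg Prod.fst hε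
    have h2' : G (li ((ε, 0) : ℝ × ℂ)) = 0 := congrArg Prod.snd hε
    have : ((li ((ε, 0) : ℝ × ℂ)).1, (li ((ε, 0) : ℝ × ℂ)).2) = (ε, (li ((ε, 0) : ℝ × ℂ)).2) := by
      rw [h1]
    rw [← this]
    simpa using h2'
  · have hlid := hg'.to_localInverse
    rw [hg0] at hlid
    rw [← hlidef] at hlid
    have hι : HasStrictFDerivAt (fun ε : ℝ => ((ε, 0) : ℝ × ℂ))
        (ContinuousLinearMap.inl ℝ ℝ ℂ) 0 := by
      have h := (ContinuousLinearMap.inl ℝ ℝ ℂ).hasStrictFDerivAt (x := (0:ℝ))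
      exact h
    have hcomp := hlid.comp (0:ℝ) hι
    have hXfd := (hasStrictFDerivAt_snd (E := ℝ) (F := ℂ)).comp (0:ℝ) hcomp
    have h := hXfd.hasFDerivAt.isBigO_sub
    simp only [sub_zero] at h
    have h0 : (li (((0:ℝ), 0) : ℝ × ℂ)).2 = X₀ := by
      have hh := hg'.localInverse_apply_image
      rw [hg0] at hh
      rw [← hlidef] at hh
      rw [hh]
    refine IsBigO.congr' h (Filter.Eventually.of_forall fun ε => ?_) EventuallyEq.rfl
    show _ - _ = _
    simp only [Function.comp_apply, h0]

/-- Assume 0 < k a₁ < c and let X₀ be any of the three (simple) roots of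
X·Q(X). Then Q(X₀) + X₀·Q'(X₀) ≠ 0 and there is a smooth branch X_ε of roots of F_ε
through X₀ with X_ε = X₀ − ε·(3 i γ k a₁/2)·Q_T(X₀)/(Q(X₀)+X₀ Q'(X₀)) + O(ε²) as ε → 0. -/
theorem stmt_7 (ρ μ c k γ : ℝ) (hρ : 0 < ρ) (hμ : 0 < μ) (hc : 0 < c) (hk : 0 < k)
    (hγ : 1 < γ) (a₁ : ℝ) (ha₁ : a₁ = 2 * μ / (3 * ρ))
    (hka : 0 < k * a₁) (hlt : k * a₁ < c)
    (ck : ℝ) (hck : ck = Real.sqrt (c ^ 2 - k ^ 2 * a₁ ^ 2))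
    (X₀ : ℂ)
    (hX₀ : X₀ ∈ ({0, -(I * (k : ℂ) * (a₁ : ℂ)) + (ck : ℂ),
        -(I * (k : ℂ) * (a₁ : ℂ)) - (ck : ℂ)} : Set ℂ)) :
    Q k a₁ c X₀ + X₀ * Q' k a₁ X₀ ≠ 0
    ∧ ∃ ε₀ : ℝ, 0 < ε₀ ∧ ∃ Xf : ℝ → ℂ,
        Xf 0 = X₀
        ∧ (∀ ε : ℝ, |ε| < ε₀ → F k a₁ c γ ε (Xf ε) = 0)
        ∧ (fun ε : ℝ => Xf ε -
              (X₀ - (ε : ℂ) * (3 * I * (γ : ℂ) * (k : ℂ) * (a₁ : ℂ) / 2) * QT k a₁ c γ X₀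
                / (Q k a₁ c X₀ + X₀ * Q' k a₁ X₀)))
            =O[nhds 0] (fun ε : ℝ => ε ^ 2) := by
  obtain ⟨hroot, hD⟩ : X₀ * Q k a₁ c X₀ = 0 ∧ Q k a₁ c X₀ + X₀ * Q' k a₁ X₀ ≠ 0 := by
    have h0 : (0:ℝ) < c^2 - k^2*a₁^2 := by nlinarith
    have hckpos : 0 < ck := by rw [hck]; exact Real.sqrt_pos.mpr h0
    have hcksqR : ck^2 = c^2 - k^2*a₁^2 := by rw [hck, Real.sq_sqrt h0.le]
    have hcksq : (ck:ℂ)^2 = (c:ℂ)^2 - (k:ℂ)^2 * (a₁:ℂ)^2 := by exact_mod_cast hcksqR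
    rw [Set.mem_insert_iff, Set.mem_insert_iff, Set.mem_singleton_iff] at hX₀
    have hI : (I:ℂ)^2 = -1 := Complex.I_sq
    rcases hX₀ with rfl | rfl | rfl
    · refine ⟨by simp, ?_⟩
      simp only [Q, Q']
      intro h
      simp only [zero_pow, mul_zero, zero_mul, add_zero, zero_add] at h
      have : (c:ℂ)^2 = 0 := by linear_combination -h
      simp at this
      exact hc.ne' this
    · constructor
      · simp only [Q]
        linear_combination (-(I*(k:ℂ)*a₁)+ck) * hcksq
          + (-(-(I*(k:ℂ)*a₁)+ck) * (k:ℂ)^2*(a₁:ℂ)^2) * hI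
      · have hDval : Q k a₁ c (-(I*(k:ℂ)*a₁)+ck) + (-(I*(k:ℂ)*a₁)+ck) * Q' k a₁ (-(I*(k:ℂ)*a₁)+ck)
            = (ck:ℂ) * (2*ck - 2*I*k*a₁) := by
          simp only [Q, Q']
          linear_combination hcksq + (-(k:ℂ)^2*(a₁:ℂ)^2) * hI
        rw [hDval]
        apply mul_ne_zero
        · exact_mod_cast hckpos.ne'
        · intro h3
          have hre := congrArg Complex.re h3
          simp at hre
          linarith
    · constructor
      · simp only [Q]
        linear_combination (-(I*(k:ℂ)*a₁)-ck) * hcksq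
          + (-(-(I*(k:ℂ)*a₁)-ck) * (k:ℂ)^2*(a₁:ℂ)^2) * hI
      · have hDval : Q k a₁ c (-(I*(k:ℂ)*a₁)-ck) + (-(I*(k:ℂ)*a₁)-ck) * Q' k a₁ (-(I*(k:ℂ)*a₁)-ck)
            = (ck:ℂ) * (2*ck + 2*I*k*a₁) := by
          simp only [Q, Q']
          linear_combination hcksq + (-(k:ℂ)^2*(a₁:ℂ)^2) * hI
        rw [hDval]
        apply mul_ne_zero
        · exact_mod_cast hckpos.ne'
        · intro h3
          have hre := congrArg Complex.re h3
          simp at hre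
          linarith
  refine ⟨hD, ?_⟩
  set K : ℂ := 3 * I * (γ:ℂ) * (k:ℂ) * (a₁:ℂ) / 2 with hKdef
  set D : ℂ := Q k a₁ c X₀ + X₀ * Q' k a₁ X₀ with hDdef
  -- complex strict derivatives
  have hQd : HasStrictDerivAt (Q k a₁ c) (Q' k a₁ X₀) X₀ := by
    have h1 : HasStrictDerivAt (fun X : ℂ => X ^ 2 + 2 * I * (k:ℂ) * (a₁:ℂ) * X - (c:ℂ)^2)
        (2 * X₀ ^ 1 + 2 * I * (k:ℂ) * (a₁:ℂ) * 1) X₀ :=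
      ((hasStrictDerivAt_pow 2 X₀).add ((hasStrictDerivAt_id X₀).const_mul
        (2 * I * (k:ℂ) * (a₁:ℂ)))).sub_const _
    simp only [Q, Q']
    simp at h1; exact h1
  have hQTd : HasStrictDerivAt (QT k a₁ c γ) (Q' k a₁ X₀) X₀ := by
    have h1 : HasStrictDerivAt (fun X : ℂ => X ^ 2 + 2 * I * (k:ℂ) * (a₁:ℂ) * X - (c:ℂ)^2/(γ:ℂ))
        (2 * X₀ ^ 1 + 2 * I * (k:ℂ) * (a₁:ℂ) * 1) X₀ :=
      ((hasStrictDerivAt_pow 2 X₀).add ((hasStrictDerivAt_id X₀).const_mul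
        (2 * I * (k:ℂ) * (a₁:ℂ)))).sub_const _
    simp only [QT, Q']
    simp at h1; exact h1
  have hPd : HasStrictDerivAt (fun X => X * Q k a₁ c X) D X₀ := by
    have := (hasStrictDerivAt_id X₀).mul hQd
    rw [hDdef]
    simp only [one_mul, id_eq] at this; exact this
  -- strict derivative of the second component
  have hGd : HasStrictFDerivAt
      (fun p : ℝ × ℂ => p.2 * Q k a₁ c p.2 + ((p.1 : ℝ) : ℂ) * (K * QT k a₁ c γ p.2))
      (D • (ContinuousLinearMap.snd ℝ ℝ ℂ)
        + (K * QT k a₁ c γ X₀) • (Complex.ofRealCLM.comp (ContinuousLinearMap.fst ℝ ℝ ℂ)))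
      ((0:ℝ), X₀) := by
    have h1 := ((hPd.hasStrictFDerivAt).restrictScalars ℝ).comp ((0:ℝ), X₀)
      (hasStrictFDerivAt_snd (𝕜 := ℝ) (E := ℝ) (F := ℂ) (p := ((0:ℝ), X₀)))
    have hu : HasStrictFDerivAt (fun p : ℝ × ℂ => ((p.1 : ℝ) : ℂ))
        (Complex.ofRealCLM.comp (ContinuousLinearMap.fst ℝ ℝ ℂ)) ((0:ℝ), X₀) :=
      (Complex.ofRealCLM.hasStrictFDerivAt).comp ((0:ℝ), X₀) hasStrictFDerivAt_fst
    have hQT2 := ((hQTd.hasStrictFDerivAt).restrictScalars ℝ).comp ((0:ℝ), X₀)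
      (hasStrictFDerivAt_snd (𝕜 := ℝ) (E := ℝ) (F := ℂ) (p := ((0:ℝ), X₀)))
    have hv := hQT2.const_mul K
    have h := h1.add (hu.mul' hv)
    refine h.congr_fderiv ?_
    rw [ContinuousLinearMap.ext_iff]
    intro x
    simp [smul_eq_mul]
    ring
  have hG0 : (fun p : ℝ × ℂ => p.2 * Q k a₁ c p.2 + ((p.1 : ℝ) : ℂ) * (K * QT k a₁ c γ p.2))
      ((0:ℝ), X₀) = 0 := by
    simp [hroot]
  obtain ⟨Xf, hXf0, hev, hdel⟩ := aux_implicit _ X₀ D (K * QT k a₁ c γ X₀) hD hGd hG0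
  -- roots of F
  have hevF : ∀ᶠ ε : ℝ in nhds 0, F k a₁ c γ ε (Xf ε) = 0 := by
    filter_upwards [hev] with ε hε
    simp only [F, ← hKdef]
    linear_combination hε
  rw [Metric.eventually_nhds_iff] at hevF
  obtain ⟨ε₀, hε₀, hball⟩ := hevF
  refine ⟨ε₀, hε₀, Xf, hXf0, ?_, ?_⟩
  · intro ε hε
    exact hball (by simpa [Real.dist_eq] using hε)
  -- the O(ε²) bound
  have hkey : ∀ᶠ ε : ℝ in nhds 0,
      Xf ε - (X₀ - (ε : ℂ) * K * QT k a₁ c γ X₀ / D)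
        = -(D⁻¹) * ((3*X₀ + 2*I*(k:ℂ)*(a₁:ℂ)) * (Xf ε - X₀)^2 + (Xf ε - X₀)^3
            + (ε:ℂ) * K * ((2*X₀ + 2*I*(k:ℂ)*(a₁:ℂ)) * (Xf ε - X₀)
              + (Xf ε - X₀)^2)) := by
    filter_upwards [hev] with ε hF
    have hpoly : D * (Xf ε - X₀) + (ε:ℂ) * K * QT k a₁ c γ X₀
        = -((3*X₀ + 2*I*(k:ℂ)*(a₁:ℂ)) * (Xf ε - X₀)^2 + (Xf ε - X₀)^3
            + (ε:ℂ) * K * ((2*X₀ + 2*I*(k:ℂ)*(a₁:ℂ)) * (Xf ε - X₀) + (Xf ε - X₀)^2)) := by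
      rw [hDdef]
      simp only [Q, QT, Q'] at hF hroot ⊢
      linear_combination hF - hroot
    have h2 : (D * (Xf ε - X₀) + (ε:ℂ) * K * QT k a₁ c γ X₀)/D
        = Xf ε - X₀ + (ε:ℂ) * K * QT k a₁ c γ X₀ / D := by
      rw [add_div, mul_div_cancel_left₀ _ hD]
    rw [show Xf ε - (X₀ - (ε:ℂ) * K * QT k a₁ c γ X₀ / D)
        = Xf ε - X₀ + (ε:ℂ) * K * QT k a₁ c γ X₀ / D from by ring, ← h2, hpoly]
    ring
  have hdel1 : (fun ε : ℝ => Xf ε - X₀) =O[nhds 0] (fun _ : ℝ => (1:ℝ)) := by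
    refine hdel.trans (IsBigO.of_bound 1 ?_)
    filter_upwards [Metric.ball_mem_nhds (0:ℝ) one_pos] with ε hε
    simp only [Metric.mem_ball, Real.dist_eq, sub_zero] at hε
    simpa using hε.le
  have hcast : (fun ε : ℝ => ((ε:ℝ) : ℂ)) =O[nhds (0:ℝ)] (fun ε : ℝ => ε) := by
    refine IsBigO.of_bound 1 (Filter.Eventually.of_forall fun ε => ?_)
    simp
  have hK1 : (fun _ : ℝ => K) =O[nhds (0:ℝ)] (fun _ : ℝ => (1:ℝ)) :=
    isBigO_const_const K one_ne_zero _
  have t1 : (fun ε : ℝ => (3*X₀ + 2*I*(k:ℂ)*(a₁:ℂ)) * (Xf ε - X₀)^2)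
      =O[nhds 0] (fun ε : ℝ => ε^2) := by
    simpa [pow_two] using (hdel.mul hdel).const_mul_left (3*X₀ + 2*I*(k:ℂ)*(a₁:ℂ))
  have t2 : (fun ε : ℝ => (Xf ε - X₀)^3) =O[nhds 0] (fun ε : ℝ => ε^2) := by
    have h := (hdel.mul hdel).mul hdel1
    simpa [pow_succ, pow_two] using h
  have i2 : (fun ε : ℝ => (Xf ε - X₀)^2) =O[nhds 0] (fun ε : ℝ => ε) := by
    simpa [pow_two] using hdel.mul hdel1
  have hinner : (fun ε : ℝ => (2*X₀ + 2*I*(k:ℂ)*(a₁:ℂ)) * (Xf ε - X₀) + (Xf ε - X₀)^2)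
      =O[nhds 0] (fun ε : ℝ => ε) :=
    (hdel.const_mul_left (2*X₀ + 2*I*(k:ℂ)*(a₁:ℂ))).add i2
  have t3 : (fun ε : ℝ => (ε:ℂ) * K * ((2*X₀ + 2*I*(k:ℂ)*(a₁:ℂ)) * (Xf ε - X₀)
      + (Xf ε - X₀)^2)) =O[nhds 0] (fun ε : ℝ => ε^2) := by
    have h := (hcast.mul hK1).mul hinner
    simpa [pow_two] using h
  have total := ((t1.add t2).add t3).const_mul_left (-(D⁻¹))
  exact total.congr' (EventuallyEq.symm hkey) EventuallyEq.rfl
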